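/- arXiv:1805.10708 — 2 statements merged into one kernel-verified Lean document; each statement's English description precedes it below -/
import Mathlib

section
/- For every j ∈ {1, …, r}, in the digraph with arc set D_j every bridge has out-degree at most 1, and D_j contains no directed cycle. Consequently, the undirected graph underlying D_j is a forest, and each of its connected components is a tree all of whose arcs are oriented toward a unique root (the unique vertex of the component with out-degree 0 in D_j). -/
/-
Along an arc (β_i, β_x) of D_j the position of r^j strictly increases (condition (b); an undefined
r_i^j is read as 0, left of every vertex of P_j), and the lexicographic maximality (c) together with
injectivity of ID makes the out-neighbour of β_i unique. A functional relation with a bounded,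
strictly increasing potential is a forest of in-trees: walking along arcs stops at a sink, any two
sinks reachable from one bridge coincide, and a cycle of the underlying graph would give its vertex
of least potential two distinct out-neighbours.
-/

namespace PaperTW

variable {V : Type*} [DecidableEq V]

/-- `v` is an internal vertex of the `s`–`t` walk `W`. -/
def Internal {G : SimpleGraph V} {s t : V} (W : G.Walk s t) (v : V) : Prop :=
  v ∈ W.support ∧ v ≠ s ∧ v ≠ t

/-- The walk `W` (oriented from `s` to `t`) traverses an edge from `u` to `v`. -/
def Traversed {G : SimpleGraph V} {s t : V} (W : G.Walk s t) (u v : V) : Prop :=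
  ∃ d ∈ W.darts, d.toProd = (u, v)

/-- A system of `s`–`t` paths that are pairwise vertex-disjoint except at the
shared endpoints `s` and `t`. -/
def PathSystem {G : SimpleGraph V} {s t : V} {r : ℕ} (P : Fin r → G.Walk s t) : Prop :=
  (∀ j, (P j).IsPath) ∧
    ∀ j j', j ≠ j' → ∀ v, v ∈ (P j).support → v ∈ (P j').support → v = s ∨ v = t

/-- The vertex `v_in` of the split residual digraph. -/
def vin (v : V) : V ⊕ V := Sum.inl v

/-- The vertex `v_out` of the split residual digraph (with the conventions
`s_in = s_out = s` and `t_in = t_out = t`). -/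
def vout (s t v : V) : V ⊕ V := if v = s ∨ v = t then Sum.inl v else Sum.inr v

variable (G : SimpleGraph V) (s t : V) {r : ℕ} (P : Fin r → G.Walk s t)

/-- Arcs of the split residual digraph `G'_res`. -/
inductive SplitArc : V ⊕ V → V ⊕ V → Prop
  | split (v : V) (h1 : v ≠ s) (h2 : v ≠ t) (h3 : ∀ j, ¬ Internal (P j) v) :
      SplitArc (vin v) (vout s t v)
  | back (v : V) (j : Fin r) (h : Internal (P j) v) :
      SplitArc (vout s t v) (vin v)
  | offpath (u v : V) (h : G.Adj u v) (h2 : ∀ j, s(u, v) ∉ (P j).edges) :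
      SplitArc (vout s t u) (vin v)
  | pathRev (u v : V) (j : Fin r) (h : Traversed (P j) u v) :
      SplitArc (vout s t v) (vin u)
  | pathRev' (u v : V) (j : Fin r) (h : Traversed (P j) u v) :
      SplitArc (vin v) (vout s t u)

open Classical in
/-- The identification map defining `G_res`: for every `v` internal to none of the
paths, `v_in` and `v_out` are identified into the single vertex `v`. -/
noncomputable def collapse : V ⊕ V → V ⊕ V
  | Sum.inl v => Sum.inl v
  | Sum.inr v => if ∃ j, Internal (P j) v then Sum.inr v else Sum.inl v

/-- Arcs of the residual digraph `G_res`. -/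
def ResArc (x y : V ⊕ V) : Prop :=
  ∃ a b, SplitArc G s t P a b ∧ x = collapse G s t P a ∧ y = collapse G s t P b

/-- The arcs `(v_out, u_in)` of `G_res` coming from edges of some path traversed
from `u` to `v` (these get deleted to form the reachability digraph). -/
def DeletedArc (x y : V ⊕ V) : Prop :=
  ∃ u v, (∃ j, Traversed (P j) u v) ∧
    x = collapse G s t P (vout s t v) ∧ y = collapse G s t P (vin u)

/-- Arcs of `G_res` with the arcs `(v_out, u_in)` (for path edges traversed from
`u` to `v`) deleted. -/
def ReachArc (x y : V ⊕ V) : Prop :=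
  ResArc G s t P x y ∧ ¬ DeletedArc G s t P x y

/-- Vertices lying on none of the paths (and different from `s`, `t`). -/
def offPath : Set V := {v | v ≠ s ∧ v ≠ t ∧ ∀ j, v ∉ (P j).support}

/-- Bridges: connected components of the subgraph of `G` induced on the vertices
off all the paths. -/
abbrev Bridge := (G.induce (offPath G s t P)).ConnectedComponent

/-- Vertices of the reachability digraph `G_R`: path vertices of `G_res`, plus one
contracted vertex `β_i` for each bridge `B_i`. -/
abbrev GRV := (V ⊕ V) ⊕ Bridge G s t P

open Classical in
/-- The contraction map from vertices of `G_res` to vertices of `G_R`. -/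
noncomputable def toGR : V ⊕ V → GRV G s t P
  | Sum.inl v =>
      if h : v ∈ offPath G s t P then
        Sum.inr ((G.induce (offPath G s t P)).connectedComponentMk ⟨v, h⟩)
      else Sum.inl (Sum.inl v)
  | Sum.inr v =>
      if h : v ∈ offPath G s t P then
        Sum.inr ((G.induce (offPath G s t P)).connectedComponentMk ⟨v, h⟩)
      else Sum.inl (Sum.inr v)

/-- Arcs of the reachability digraph `G_R` (arcs inside a bridge disappear). -/
def GRArc (X Y : GRV G s t P) : Prop :=
  (∃ a b, ReachArc G s t P a b ∧ X = toGR G s t P a ∧ Y = toGR G s t P b) ∧ X ≠ Y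

/-- The vertices of the directed path `P_j` inside `G_res`/`G_R`. -/
def OnPath (j : Fin r) (x : V ⊕ V) : Prop :=
  x = Sum.inl s ∨ x = Sum.inl t ∨ ∃ v, Internal (P j) v ∧ (x = Sum.inl v ∨ x = Sum.inr v)

/-- Numbering of the vertices of the directed path `P_j` of `G_R` (going from `t`
to `s`) starting from its final vertex `s`: `s` gets number 1, and the `i`-th
internal vertex `v` (counted from the `s`-side, whence `v` has index `i` in the
support of `P_j`) contributes `v_in ↦ 2i` and `v_out ↦ 2i + 1`; finally `t` gets
the largest number. -/
def posOn (j : Fin r) : V ⊕ V → ℕ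
  | Sum.inl v =>
      if v = s then 1
      else if v = t then 2 * (P j).support.length - 2
      else 2 * (P j).support.idxOf v
  | Sum.inr v => 2 * (P j).support.idxOf v + 1

/-- Positions on `P_j` of the in-neighbors of the bridge `β` in `G_R`. -/
def InPos (β : Bridge G s t P) (j : Fin r) : Set ℕ :=
  {n | ∃ x, OnPath G s t P j x ∧ GRArc G s t P (Sum.inl x) (Sum.inr β) ∧ posOn G s t P j x = n}

/-- Positions on `P_j` of the out-neighbors of the bridge `β` in `G_R`. -/
def OutPos (β : Bridge G s t P) (j : Fin r) : Set ℕ :=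
  {n | ∃ x, OnPath G s t P j x ∧ GRArc G s t P (Sum.inr β) (Sum.inl x) ∧ posOn G s t P j x = n}

/-- `l_β^j` is defined. -/
def HasL (β : Bridge G s t P) (j : Fin r) : Prop := (InPos G s t P β j).Nonempty

/-- `r_β^j` is defined. -/
def HasR (β : Bridge G s t P) (j : Fin r) : Prop := (OutPos G s t P β j).Nonempty

/-- The position of `l_β^j`, the leftmost in-neighbor of `β` on `P_j`. -/
noncomputable def lpos (β : Bridge G s t P) (j : Fin r) : ℕ := sInf (InPos G s t P β j)

/-- The position of `r_β^j`, the rightmost out-neighbor of `β` on `P_j`. -/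
noncomputable def rpos (β : Bridge G s t P) (j : Fin r) : ℕ := sSup (OutPos G s t P β j)

/-- Condition (a) of the definition of `D_j`. -/
def CondA (βi βx : Bridge G s t P) : Prop :=
  ∃ y : Fin r, HasL G s t P βx y ∧ HasR G s t P βi y ∧ lpos G s t P βx y ≤ rpos G s t P βi y

/-- Condition (b) of the definition of `D_j`. -/
def CondB (j : Fin r) (βi βx : Bridge G s t P) : Prop :=
  HasR G s t P βx j ∧ (¬ HasR G s t P βi j ∨ rpos G s t P βi j < rpos G s t P βx j)

variable (ID : Bridge G s t P → ℕ)

/-- The arc set `D_j` of the bridge graph. -/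
def DArc (j : Fin r) (βi βx : Bridge G s t P) : Prop :=
  βi ≠ βx ∧ CondA G s t P βi βx ∧ CondB G s t P j βi βx ∧
    ∀ βz : Bridge G s t P, βz ≠ βi → CondA G s t P βi βz → CondB G s t P j βi βz →
      (rpos G s t P βz j < rpos G s t P βx j ∨
        (rpos G s t P βz j = rpos G s t P βx j ∧ ID βz ≤ ID βx))

/-- Lying in the same connected component of the undirected graph underlying `D_j`. -/
def SameCompD (j : Fin r) : Bridge G s t P → Bridge G s t P → Prop :=
  Relation.ReflTransGen (fun a b => DArc G s t P ID j a b ∨ DArc G s t P ID j b a)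

/-- `v` is a vertex of the bridge `β`. -/
def InBridge (β : Bridge G s t P) (v : V) : Prop :=
  ∃ h : v ∈ offPath G s t P, (G.induce (offPath G s t P)).connectedComponentMk ⟨v, h⟩ = β

/-- The bridge `β` is `s`-reachable: some vertex of it is adjacent to `s` in `G`. -/
def SReachable (β : Bridge G s t P) : Prop := ∃ v, InBridge G s t P β v ∧ G.Adj s v

/-- The bridge `β` is `t`-reachable: some vertex of it is adjacent to `t` in `G`. -/
def TReachable (β : Bridge G s t P) : Prop := ∃ v, InBridge G s t P β v ∧ G.Adj v t

/-- The bridge `β` is mutually reachable with `s` in the reachability digraph `G_R`. -/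
def BridgeWithS (β : Bridge G s t P) : Prop :=
  Relation.ReflTransGen (GRArc G s t P) (Sum.inl (Sum.inl s)) (Sum.inr β) ∧
  Relation.ReflTransGen (GRArc G s t P) (Sum.inr β) (Sum.inl (Sum.inl s))


/-- The undirected simple graph underlying the arc set `D_j`. -/
def underlyingD {V : Type*} [DecidableEq V] (G : SimpleGraph V) (s t : V)
    {r : ℕ} (P : Fin r → G.Walk s t) (ID : Bridge G s t P → ℕ) (j : Fin r) :
    SimpleGraph (Bridge G s t P) where
  Adj a b := DArc G s t P ID j a b ∨ DArc G s t P ID j b a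
  symm := ⟨fun _ _ h => Or.symm h⟩
  loopless := ⟨fun a h => by
    cases h with
    | inl h => exact h.1 rfl
    | inr h => exact h.1 rfl⟩

section Relations

open Relation

variable {α : Type*} {D : α → α → Prop}

theorem _root_.Relation.ReflTransGen.total_of_rightUnique (hD : Relator.RightUnique D)
    {a b c : α} (hab : ReflTransGen D a b) (hac : ReflTransGen D a c) :
    ReflTransGen D b c ∨ ReflTransGen D c b := by
  induction hab using ReflTransGen.head_induction_on with
  | refl => exact Or.inl hac
  | head had hdb ih =>
    rcases hac.cases_head with rfl | ⟨d', had', hd'c⟩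
    · exact Or.inr (.head had hdb)
    · cases hD had had'
      exact ih hd'c

theorem _root_.Relation.ReflTransGen.eq_of_forall_not {a b : α} (hab : ReflTransGen D a b)
    (ha : ∀ c, ¬ D a c) : a = b := by
  rcases hab.cases_head with rfl | ⟨c, hac, -⟩
  · rfl
  · exact absurd hac (ha c)

theorem _root_.Relation.terminal_unique_of_rightUnique (hD : Relator.RightUnique D)
    {a ρ ρ' : α} (h : ReflTransGen D a ρ) (hρ : ∀ c, ¬ D ρ c)
    (h' : ReflTransGen D a ρ') (hρ' : ∀ c, ¬ D ρ' c) : ρ = ρ' := by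
  rcases h.total_of_rightUnique hD h' with h | h
  · exact h.eq_of_forall_not hρ
  · exact (h.eq_of_forall_not hρ').symm

theorem _root_.Relation.reflTransGen_of_symm_of_terminal (hD : Relator.RightUnique D) {a ρ : α}
    (h : ReflTransGen (fun a b => D a b ∨ D b a) a ρ) (hρ : ∀ c, ¬ D ρ c) :
    ReflTransGen D a ρ := by
  induction h using ReflTransGen.head_induction_on with
  | refl => exact .refl
  | head hab _ ih =>
    rcases hab with hab | hba
    · exact .head hab ih
    · rcases (ReflTransGen.single hba).total_of_rightUnique hD ih with h | h
      · exact h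
      · rw [h.eq_of_forall_not hρ]

theorem _root_.Relation.exists_terminal_of_lt_of_le (f : α → ℕ) (M : ℕ)
    (hM : ∀ a, f a ≤ M) (hf : ∀ ⦃a b⦄, D a b → f a < f b) (a : α) :
    ∃ ρ, ReflTransGen D a ρ ∧ ∀ c, ¬ D ρ c := by
  obtain ⟨ρ, haρ, hmin⟩ :=
    (measure fun b => M - f b).wf.has_min {b | ReflTransGen D a b} ⟨a, .refl⟩
  refine ⟨ρ, haρ, fun c hρc => hmin c (haρ.tail hρc) ?_⟩
  have hlt := hf hρc
  have hle := hM c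
  show M - f c < M - f ρ
  omega

theorem _root_.Relation.not_transGen_self_of_lt {β : Type*} [Preorder β] (f : α → β)
    (hf : ∀ ⦃a b⦄, D a b → f a < f b) (a : α) : ¬ TransGen D a a := fun h =>
  lt_irrefl (f a) (by simpa only [transGen_eq_self] using h.lift f hf)

theorem _root_.SimpleGraph.isAcyclic_of_orientation {β : Type*} [LinearOrder β]
    {H : SimpleGraph α} (hH : ∀ ⦃a b⦄, H.Adj a b → D a b ∨ D b a)
    (hD : Relator.RightUnique D) (f : α → β) (hf : ∀ ⦃a b⦄, D a b → f a < f b) :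
    H.IsAcyclic := by
  classical
  intro u c hc
  obtain ⟨v, hv, hmin⟩ := c.support.toFinset.exists_min_image f ⟨u, by simp⟩
  rw [List.mem_toFinset] at hv
  set c' := c.rotate v hv
  have hc' : c'.IsCycle := hc.rotate hv
  have hmin' : ∀ w ∈ c'.support, f v ≤ f w := fun w hw =>
    hmin w (List.mem_toFinset.mpr ((c.mem_support_rotate_iff v hv).mp hw))
  have hout : ∀ w ∈ c'.support, H.Adj v w → D v w := fun w hw hvw =>
    (hH hvw).resolve_right fun hwv => (hf hwv).not_ge (hmin' w hw)
  exact hc'.snd_ne_penultimate <| hD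
    (hout _ (c'.getVert_mem_support 1) (c'.adj_snd hc'.not_nil))
    (hout _ (c'.getVert_mem_support _) (c'.adj_penultimate hc'.not_nil).symm)

end Relations

section Positions

variable {G s t P}

theorem one_le_posOn (j : Fin r) (x : V ⊕ V) : 1 ≤ posOn G s t P j x := by
  cases x with
  | inl v =>
    simp only [posOn]
    split_ifs with hs ht
    · exact le_rfl
    · subst ht
      have : (P j).length ≠ 0 := fun h => hs (SimpleGraph.Walk.eq_of_length_eq_zero h).symm
      rw [SimpleGraph.Walk.length_support]
      omega
    · rw [← (P j).cons_tail_support, List.idxOf_cons_ne _ (Ne.symm hs)]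
      omega
  | inr v => simp only [posOn]; omega

theorem posOn_le (j : Fin r) (x : V ⊕ V) :
    posOn G s t P j x ≤ 2 * (P j).support.length + 1 := by
  have hidx : ∀ v : V, (P j).support.idxOf v ≤ (P j).support.length :=
    fun _ => List.idxOf_le_length
  cases x with
  | inl v => simp only [posOn]; split_ifs <;> have := hidx v <;> omega
  | inr v => simp only [posOn]; have := hidx v; omega

theorem bddAbove_outPos (β : Bridge G s t P) (j : Fin r) : BddAbove (OutPos G s t P β j) :=
  ⟨_, fun _ ⟨x, _, _, hx⟩ => hx ▸ posOn_le j x⟩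

theorem rpos_eq_zero_of_not_hasR {β : Bridge G s t P} {j : Fin r} (h : ¬ HasR G s t P β j) :
    rpos G s t P β j = 0 := by
  rw [rpos, Set.not_nonempty_iff_eq_empty.mp h, csSup_empty, Nat.bot_eq_zero]

theorem rpos_le (β : Bridge G s t P) (j : Fin r) :
    rpos G s t P β j ≤ 2 * (P j).support.length + 1 := by
  by_cases h : HasR G s t P β j
  · exact csSup_le h fun _ ⟨x, _, _, hx⟩ => hx ▸ posOn_le j x
  · simp [rpos_eq_zero_of_not_hasR h]

theorem one_le_rpos {β : Bridge G s t P} {j : Fin r} (h : HasR G s t P β j) :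
    1 ≤ rpos G s t P β j := by
  obtain ⟨n, hn⟩ := h
  refine le_csSup_of_le (bddAbove_outPos β j) hn ?_
  obtain ⟨x, -, -, rfl⟩ := hn
  exact one_le_posOn j x

end Positions

section ArcsOfD

variable {G s t P ID} {j : Fin r}

theorem rpos_lt_of_DArc {βi βx : Bridge G s t P} (h : DArc G s t P ID j βi βx) :
    rpos G s t P βi j < rpos G s t P βx j := by
  obtain ⟨-, -, ⟨hx, hi | hi⟩, -⟩ := h
  · rw [rpos_eq_zero_of_not_hasR hi]
    exact one_le_rpos hx
  · exact hi

theorem DArc_rightUnique (hID : Function.Injective ID) :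
    Relator.RightUnique (DArc G s t P ID j) := by
  intro βi βx βx' h h'
  have h₁ := h.2.2.2 βx' (Ne.symm h'.1) h'.2.1 h'.2.2.1
  have h₂ := h'.2.2.2 βx (Ne.symm h.1) h.2.1 h.2.2.1
  rcases h₁ with h₁ | ⟨h₁', h₁⟩ <;> rcases h₂ with h₂ | ⟨h₂', h₂⟩
  all_goals first | omega | exact hID (le_antisymm h₂ h₁)

end ArcsOfD

theorem Dj_is_forest_of_in_trees_general
    {V : Type*} [DecidableEq V]
    (G : SimpleGraph V) (s t : V)
    {r : ℕ} (P : Fin r → G.Walk s t)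
    (ID : Bridge G s t P → ℕ) (hID : Function.Injective ID) :
    ∀ j : Fin r,
      (∀ βi βx βx' : Bridge G s t P,
        DArc G s t P ID j βi βx → DArc G s t P ID j βi βx' → βx = βx') ∧
      (∀ β : Bridge G s t P, ¬ Relation.TransGen (DArc G s t P ID j) β β) ∧
      (underlyingD G s t P ID j).IsAcyclic ∧
      (∀ β : Bridge G s t P,
        ∃! ρ : Bridge G s t P,
          SameCompD G s t P ID j β ρ ∧ ∀ γ, ¬ DArc G s t P ID j ρ γ) ∧
      (∀ β ρ : Bridge G s t P,
        SameCompD G s t P ID j β ρ → (∀ γ, ¬ DArc G s t P ID j ρ γ) →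
          Relation.ReflTransGen (DArc G s t P ID j) β ρ) := by
  intro j
  have hD : Relator.RightUnique (DArc G s t P ID j) := DArc_rightUnique hID
  have hlt : ∀ ⦃a b⦄, DArc G s t P ID j a b → rpos G s t P a j < rpos G s t P b j :=
    fun _ _ => rpos_lt_of_DArc
  refine ⟨fun _ _ _ => @hD _ _ _, Relation.not_transGen_self_of_lt _ hlt,
    SimpleGraph.isAcyclic_of_orientation (fun _ _ h => h) hD _ hlt, fun β => ?_,
    fun _ _ => Relation.reflTransGen_of_symm_of_terminal hD⟩
  obtain ⟨ρ, hβρ, hρ⟩ := Relation.exists_terminal_of_lt_of_le _ _ (rpos_le · j) hlt β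
  have hcomp : SameCompD G s t P ID j β ρ :=
    Relation.ReflTransGen.mono (fun _ _ => Or.inl) _ _ hβρ
  refine ⟨ρ, ⟨hcomp, hρ⟩, fun ρ' ⟨hβρ', hρ'⟩ => ?_⟩
  exact Relation.terminal_unique_of_rightUnique hD
    (Relation.reflTransGen_of_symm_of_terminal hD hβρ' hρ') hρ' hβρ hρ

/-- For every `j`, in the digraph with arc set `D_j` every bridge has out-degree
at most 1 and there is no directed cycle. Consequently, the undirected graph
underlying `D_j` is a forest, and each of its connected components is a tree all
of whose arcs are oriented toward a unique root, the unique vertex of the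
component with out-degree 0 in `D_j`. -/
theorem Dj_is_forest_of_in_trees
    {V : Type*} [Fintype V] [DecidableEq V]
    (G : SimpleGraph V) (s t : V) (hst : s ≠ t)
    {r : ℕ} (hr : 1 ≤ r) (P : Fin r → G.Walk s t) (hP : PathSystem P)
    (ID : Bridge G s t P → ℕ) (hID : Function.Injective ID) :
    ∀ j : Fin r,
      (∀ βi βx βx' : Bridge G s t P,
        DArc G s t P ID j βi βx → DArc G s t P ID j βi βx' → βx = βx') ∧
      (∀ β : Bridge G s t P, ¬ Relation.TransGen (DArc G s t P ID j) β β) ∧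
      (underlyingD G s t P ID j).IsAcyclic ∧
      (∀ β : Bridge G s t P,
        ∃! ρ : Bridge G s t P,
          SameCompD G s t P ID j β ρ ∧ ∀ γ, ¬ DArc G s t P ID j ρ γ) ∧
      (∀ β ρ : Bridge G s t P,
        SameCompD G s t P ID j β ρ → (∀ γ, ¬ DArc G s t P ID j ρ γ) →
          Relation.ReflTransGen (DArc G s t P ID j) β ρ) :=
  Dj_is_forest_of_in_trees_general G s t P ID hID

end PaperTW
end

section
/- Assume each P_j has at least one internal vertex, and suppose s and t are not mutually reachable in G_res. Let ℬ be the set of bridges β_i that are mutually reachable with s in the reachability digraph G_R. For each j ∈ {1, …, r}, define a vertex w_j of G as follows: if some β_i ∈ ℬ has an out-neighbor on P_j of the form v_in with v an internal vertex of P_j, let w_j be the internal vertex v of P_j such that v_in is the rightmost such out-neighbor over all β_i ∈ ℬ; otherwise, let w_j be the internal vertex of P_j adjacent to s. Then {w_1, …, w_r} is an s–t vertex cut of G: every s–t path in G contains some w_j. In particular, G has an s–t vertex cut of size at most r. -/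
namespace PaperTW

variable {V : Type*} [DecidableEq V]

variable (G : SimpleGraph V) (s t : V) {r : ℕ} (P : Fin r → G.Walk s t)

variable (ID : Bridge G s t P → ℕ)

/-! The vertices of the `s`-side of the cut are `s`, the vertices of the bridges in `ℬ`, and,
on each `P_j`, the internal vertices up to `w_j`. This set contains `s` but not `t`, and every
neighbour of one of its vertices other than the `w_j` lies in it again, so every `s`–`t` walk
passes through some `w_j`. A neighbour in a bridge gives a closed walk in `G_R` through `s`
(from `s` to a bridge of `ℬ`, to `w_j`, down `P_j` and into the bridge, then back down `P_j` to
`s`); a neighbour on `P_j` lies left of `w_j` since `w_j` is the rightmost out-neighbour of `ℬ`;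
and `t` is no neighbour, since a bridge of `ℬ` adjacent to `t` would make `s` and `t` mutually
reachable in `G_res`. -/

section Walk

variable {V : Type*} {G : SimpleGraph V} {a b u v : V} {W : G.Walk a b}

lemma traversed_iff : Traversed W u v ↔ ∃ h : G.Adj u v, (⟨(u, v), h⟩ : G.Dart) ∈ W.darts := by
  constructor
  · rintro ⟨⟨⟨u', v'⟩, h⟩, hd, he⟩
    obtain ⟨rfl, rfl⟩ := Prod.mk.inj he
    exact ⟨h, hd⟩
  · rintro ⟨h, hd⟩
    exact ⟨_, hd, rfl⟩

lemma Traversed.adj (h : Traversed W u v) : G.Adj u v := (traversed_iff.1 h).1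

lemma Traversed.fst_mem (h : Traversed W u v) : u ∈ W.support :=
  W.dart_fst_mem_support_of_mem_darts (traversed_iff.1 h).2

lemma Traversed.snd_mem (h : Traversed W u v) : v ∈ W.support :=
  W.dart_snd_mem_support_of_mem_darts (traversed_iff.1 h).2

lemma traversed_or_traversed_of_mem_edges (h : s(u, v) ∈ W.edges) :
    Traversed W u v ∨ Traversed W v u := by
  obtain ⟨d, hd, hdu⟩ := List.mem_map.1 h
  rcases Sym2.eq_iff.1 hdu with ⟨rfl, rfl⟩ | ⟨rfl, rfl⟩
  exacts [Or.inl ⟨d, hd, rfl⟩, Or.inr ⟨d, hd, rfl⟩]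

variable [DecidableEq V]

lemma Traversed.idxOf_snd (hW : W.IsPath) (h : Traversed W u v) :
    W.support.idxOf v = W.support.idxOf u + 1 := by
  obtain ⟨hadj, hd⟩ := traversed_iff.1 h
  obtain ⟨i, -, hi⟩ := List.infix_iff_getElem?.1
    ((SimpleGraph.Walk.mem_darts_iff_infix_support hadj).1 hd)
  have hu := hi 0 (by simp)
  have hv := hi 1 (by simp)
  simp only [List.getElem?_eq_some_iff] at hu hv
  grind [List.Nodup.idxOf_getElem, hW.support_nodup]

lemma idxOf_support_start (W : G.Walk a b) : W.support.idxOf a = 0 := by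
  rw [← W.cons_tail_support, List.idxOf_cons_self]

lemma idxOf_support_pos (hv : v ∈ W.support) (hva : v ≠ a) : 0 < W.support.idxOf v := by
  refine Nat.pos_of_ne_zero fun h => hva ((List.idxOf_inj hv).1 ?_)
  rw [h, idxOf_support_start]

lemma idxOf_support_end (hW : W.IsPath) : W.support.idxOf b = W.support.length - 1 := by
  have hcat := W.dropLast_support_concat
  have hb : b ∉ W.support.dropLast := by
    have hnd := hW.support_nodup
    rw [← hcat, List.nodup_append] at hnd
    exact fun hb => hnd.2.2 b hb b (List.mem_singleton_self b) rfl
  rw [← hcat, List.idxOf_append_of_notMem hb]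
  simp

lemma idxOf_support_lt_end (hW : W.IsPath) (hv : v ∈ W.support) (hvb : v ≠ b) :
    W.support.idxOf v < W.support.idxOf b := by
  have hlt := List.idxOf_lt_length_iff.2 hv
  have hne : W.support.idxOf v ≠ W.support.idxOf b := fun h => hvb ((List.idxOf_inj hv).1 h)
  rw [idxOf_support_end hW] at hne ⊢
  omega

lemma Traversed.snd_ne_start (hW : W.IsPath) (h : Traversed W u v) : v ≠ a := by
  rintro rfl
  have := h.idxOf_snd hW
  rw [idxOf_support_start] at this
  omega

lemma Traversed.fst_ne_end (hW : W.IsPath) (h : Traversed W u v) : u ≠ b := by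
  rintro rfl
  have hv := h.idxOf_snd hW
  have hlt := List.idxOf_lt_length_iff.2 h.snd_mem
  rw [idxOf_support_end hW] at hv
  omega

lemma not_traversed_start_end (hW : W.IsPath) (hv : Internal W v) : ¬ Traversed W a b := by
  intro h
  have hab := h.idxOf_snd hW
  rw [idxOf_support_start] at hab
  have hvb := idxOf_support_lt_end hW hv.1 hv.2.2
  have hva := idxOf_support_pos hv.1 hv.2.1
  omega

lemma mem_support_takeUntil_of_idxOf_le (hv : v ∈ W.support)
    (huv : W.support.idxOf u ≤ W.support.idxOf v) : u ∈ (W.takeUntil v hv).support := by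
  have hpre := W.support_takeUntil_prefix_support hv
  rw [hpre.mem_iff_idxOf_lt_length]
  exact huv.trans_lt ((hpre.mem_iff_idxOf_lt_length v).1 (W.takeUntil v hv).end_mem_support)

end Walk

def NoChords {V : Type*} (G : SimpleGraph V) (s t : V) {r : ℕ} (P : Fin r → G.Walk s t) : Prop :=
  ∀ u v : V, G.Adj u v →
    (u = s ∨ u = t ∨ ∃ j, u ∈ (P j).support) →
    (v = s ∨ v = t ∨ ∃ j, v ∈ (P j).support) →
    ∃ j, s(u, v) ∈ (P j).edges

def bridgeOf {V : Type*} {G : SimpleGraph V} {s t : V} {r : ℕ} {P : Fin r → G.Walk s t}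
    (v : V) (hv : v ∈ offPath G s t P) : Bridge G s t P :=
  (G.induce (offPath G s t P)).connectedComponentMk ⟨v, hv⟩

/- In `G_R`, `Sum.inl (Sum.inl v)` is `v_in` (or `v` itself when `v_in` and `v_out` are
identified), `Sum.inl (Sum.inr v)` is `v_out`, and `Sum.inr β` is the contracted bridge `β`. -/

section Residual

variable {V : Type*} {G : SimpleGraph V} {s t : V} {r : ℕ} {P : Fin r → G.Walk s t}

lemma PathSystem.eq_of_internal (hP : PathSystem P) {j j' : Fin r} {v : V}
    (hv : Internal (P j) v) (hv' : v ∈ (P j').support) : j' = j := by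
  by_contra hne
  rcases hP.2 j' j hne v hv' hv.1 with h | h
  exacts [hv.2.1 h, hv.2.2 h]

lemma NoChords.traversed_of_internal (hE : NoChords G s t P) (hP : PathSystem P) {j : Fin r}
    {u v : V} (hu : Internal (P j) u) (hadj : G.Adj u v)
    (hv : v = s ∨ v = t ∨ ∃ j, v ∈ (P j).support) :
    Traversed (P j) u v ∨ Traversed (P j) v u := by
  obtain ⟨j', hj'⟩ := hE u v hadj (Or.inr (Or.inr ⟨j, hu.1⟩)) hv
  obtain rfl := hP.eq_of_internal hu ((P j').fst_mem_support_of_mem_edges hj')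
  exact traversed_or_traversed_of_mem_edges hj'

lemma notMem_offPath_of_mem_support {j : Fin r} {v : V} (h : v ∈ (P j).support) :
    v ∉ offPath G s t P :=
  fun hv => hv.2.2 j h

lemma start_notMem_offPath : s ∉ offPath G s t P := fun h => h.1 rfl

lemma toGR_inl_of_notMem {v : V} (hv : v ∉ offPath G s t P) :
    toGR G s t P (Sum.inl v) = Sum.inl (Sum.inl v) := dif_neg hv

lemma toGR_inr_of_notMem {v : V} (hv : v ∉ offPath G s t P) :
    toGR G s t P (Sum.inr v) = Sum.inl (Sum.inr v) := dif_neg hv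

lemma toGR_inl_of_mem {v : V} (hv : v ∈ offPath G s t P) :
    toGR G s t P (Sum.inl v) = Sum.inr (bridgeOf v hv) := dif_pos hv

lemma notMem_offPath_of_collapse_eq_inr {a : V ⊕ V} {z : V}
    (h : collapse G s t P a = Sum.inr z) : z ∉ offPath G s t P := by
  cases a with
  | inl => simp [collapse] at h
  | inr a =>
    dsimp only [collapse] at h
    split_ifs at h with ha
    obtain rfl := Sum.inr.inj h
    obtain ⟨j, hj⟩ := ha
    exact notMem_offPath_of_mem_support hj.1

lemma collapse_inl (v : V) : collapse G s t P (Sum.inl v) = Sum.inl v := rfl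

lemma toGR_eq_of_mem_range {x : V ⊕ V} (hx : x ∈ Set.range (collapse G s t P)) :
    toGR G s t P x = Sum.inl x ∨
      ∃ v hv, x = Sum.inl v ∧ toGR G s t P x = Sum.inr (bridgeOf v hv) := by
  obtain ⟨a, rfl⟩ := hx
  rcases hc : collapse G s t P a with v | v
  · by_cases hv : v ∈ offPath G s t P
    exacts [Or.inr ⟨v, hv, rfl, toGR_inl_of_mem hv⟩, Or.inl (toGR_inl_of_notMem hv)]
  · exact Or.inl (toGR_inr_of_notMem (notMem_offPath_of_collapse_eq_inr hc))

variable [DecidableEq V]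

lemma NoChords.traversed_start (hE : NoChords G s t P) (hP : PathSystem P) {v : V}
    (hadj : G.Adj s v) (hv : v = t ∨ ∃ j, v ∈ (P j).support) :
    ∃ j, Traversed (P j) s v := by
  obtain ⟨j, hj⟩ := hE s v hadj (Or.inl rfl) (Or.inr hv)
  refine ⟨j, (traversed_or_traversed_of_mem_edges hj).resolve_right fun h => ?_⟩
  exact h.snd_ne_start (hP.1 j) rfl

lemma vout_start : vout s t s = Sum.inl s := if_pos (Or.inl rfl)

lemma vout_end : vout s t t = Sum.inl t := if_pos (Or.inr rfl)

lemma collapse_vout_of_internal {j : Fin r} {v : V} (hv : Internal (P j) v) :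
    collapse G s t P (vout s t v) = Sum.inr v := by
  rw [vout, if_neg (by rintro (h | h) <;> simp_all [Internal]), collapse, if_pos ⟨j, hv⟩]

lemma collapse_vout_of_mem_offPath {v : V} (hv : v ∈ offPath G s t P) :
    collapse G s t P (vout s t v) = Sum.inl v := by
  rw [vout, if_neg (by rintro (h | h) <;> simp_all [offPath]), collapse,
    if_neg fun ⟨j, hj⟩ => notMem_offPath_of_mem_support hj.1 hv]

lemma resArc_of_adj {u v : V} (hadj : G.Adj u v)
    (hoff : u ∈ offPath G s t P ∨ v ∈ offPath G s t P) :
    ResArc G s t P (collapse G s t P (vout s t u)) (Sum.inl v) := by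
  refine ⟨_, _, SplitArc.offpath u v hadj fun j hj => ?_, rfl, rfl⟩
  rcases hoff with hu | hv
  exacts [notMem_offPath_of_mem_support ((P j).fst_mem_support_of_mem_edges hj) hu,
    notMem_offPath_of_mem_support ((P j).snd_mem_support_of_mem_edges hj) hv]

lemma DeletedArc.exists_traversed (hP : PathSystem P) {x y : V ⊕ V}
    (h : DeletedArc G s t P x y) :
    ∃ j u v, Traversed (P j) u v ∧ y = Sum.inl u ∧ (x = Sum.inl t ∨ x = Sum.inr v) := by
  obtain ⟨u, v, ⟨j, huv⟩, rfl, rfl⟩ := h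
  refine ⟨j, u, v, huv, rfl, ?_⟩
  by_cases hvt : v = t
  · subst hvt
    exact Or.inl (by rw [vout_end, collapse_inl])
  · exact Or.inr (collapse_vout_of_internal ⟨huv.snd_mem, huv.snd_ne_start (hP.1 j), hvt⟩)

lemma not_deletedArc_of_inl (hP : PathSystem P) {z : V} (hz : z ≠ t) (y : V ⊕ V) :
    ¬ DeletedArc G s t P (Sum.inl z) y := by
  intro h
  obtain ⟨j, u, v, -, -, hx | hx⟩ := h.exists_traversed hP
  exacts [hz (Sum.inl.inj hx), Sum.inl_ne_inr hx]

lemma not_deletedArc_of_inr (hP : PathSystem P) (x : V ⊕ V) (z : V) :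
    ¬ DeletedArc G s t P x (Sum.inr z) := by
  intro h
  obtain ⟨j, u, v, -, hy, -⟩ := h.exists_traversed hP
  exact Sum.inr_ne_inl hy

lemma not_deletedArc_of_mem_offPath (hP : PathSystem P) (x : V ⊕ V) {z : V}
    (hz : z ∈ offPath G s t P) : ¬ DeletedArc G s t P x (Sum.inl z) := by
  intro h
  obtain ⟨j, u, v, huv, hy, -⟩ := h.exists_traversed hP
  obtain rfl := Sum.inl.inj hy
  exact notMem_offPath_of_mem_support huv.fst_mem hz

lemma not_deletedArc_inr_inl (hP : PathSystem P) (z : V) :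
    ¬ DeletedArc G s t P (Sum.inr z) (Sum.inl z) := by
  intro h
  obtain ⟨j, u, v, huv, hy, hx | hx⟩ := h.exists_traversed hP
  · exact Sum.inr_ne_inl hx
  · obtain rfl := Sum.inl.inj hy
    obtain rfl := Sum.inr.inj hx
    exact huv.adj.ne rfl

lemma grArc_of_resArc {x y : V ⊕ V} {X Y : GRV G s t P} (h : ResArc G s t P x y)
    (hd : ¬ DeletedArc G s t P x y) (hx : toGR G s t P x = X) (hy : toGR G s t P y = Y)
    (hne : X ≠ Y) : GRArc G s t P X Y :=
  ⟨⟨x, y, ⟨h, hd⟩, hx.symm, hy.symm⟩, hne⟩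

lemma grArc_start_bridge (hst : s ≠ t) (hP : PathSystem P) {v : V} (hv : v ∈ offPath G s t P)
    (hadj : G.Adj s v) : GRArc G s t P (Sum.inl (Sum.inl s)) (Sum.inr (bridgeOf v hv)) := by
  have h := resArc_of_adj (P := P) hadj (Or.inr hv)
  rw [vout_start, collapse_inl] at h
  exact grArc_of_resArc h (not_deletedArc_of_inl hP hst _)
    (toGR_inl_of_notMem start_notMem_offPath) (toGR_inl_of_mem hv) Sum.inl_ne_inr

lemma grArc_bridge_out (hP : PathSystem P) {u x : V} (hu : u ∈ offPath G s t P)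
    (hadj : G.Adj u x) (hx : x ∉ offPath G s t P) :
    GRArc G s t P (Sum.inr (bridgeOf u hu)) (Sum.inl (Sum.inl x)) := by
  have h := resArc_of_adj (P := P) hadj (Or.inl hu)
  rw [collapse_vout_of_mem_offPath hu] at h
  exact grArc_of_resArc h (not_deletedArc_of_inl hP hu.2.1 _)
    (toGR_inl_of_mem hu) (toGR_inl_of_notMem hx) Sum.inr_ne_inl

lemma grArc_out_bridge (hP : PathSystem P) {j : Fin r} {u x : V} (hu : Internal (P j) u)
    (hx : x ∈ offPath G s t P) (hadj : G.Adj u x) :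
    GRArc G s t P (Sum.inl (Sum.inr u)) (Sum.inr (bridgeOf x hx)) := by
  have h := resArc_of_adj (P := P) hadj (Or.inr hx)
  rw [collapse_vout_of_internal hu] at h
  exact grArc_of_resArc h (not_deletedArc_of_mem_offPath hP _ hx)
    (toGR_inr_of_notMem (notMem_offPath_of_mem_support hu.1)) (toGR_inl_of_mem hx)
    Sum.inl_ne_inr

lemma grArc_back (hP : PathSystem P) {j : Fin r} {v : V} (hv : Internal (P j) v) :
    GRArc G s t P (Sum.inl (Sum.inr v)) (Sum.inl (Sum.inl v)) := by
  have h : ResArc G s t P _ _ := ⟨_, _, SplitArc.back v j hv, rfl, rfl⟩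
  rw [collapse_vout_of_internal hv, vin, collapse_inl] at h
  have hv' := notMem_offPath_of_mem_support hv.1
  exact grArc_of_resArc h (not_deletedArc_inr_inl hP v)
    (toGR_inr_of_notMem hv') (toGR_inl_of_notMem hv') (by simp)

lemma grArc_of_traversed (hP : PathSystem P) {j : Fin r} (hj : ¬ Traversed (P j) s t)
    {a c : V} (h : Traversed (P j) a c) :
    GRArc G s t P (Sum.inl (Sum.inl c)) (Sum.inl (collapse G s t P (vout s t a))) := by
  have harc : ResArc G s t P _ _ := ⟨_, _, SplitArc.pathRev' a c j h, rfl, rfl⟩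
  rw [vin, collapse_inl] at harc
  have hc := notMem_offPath_of_mem_support h.snd_mem
  have hcs : c ≠ s := h.snd_ne_start (hP.1 j)
  by_cases has : a = s
  · subst has
    rw [vout_start, collapse_inl] at harc ⊢
    have hct : c ≠ t := by rintro rfl; exact hj h
    exact grArc_of_resArc harc (not_deletedArc_of_inl hP hct _) (toGR_inl_of_notMem hc)
      (toGR_inl_of_notMem start_notMem_offPath) (by simpa using hcs)
  · have ha : Internal (P j) a := ⟨h.fst_mem, has, h.fst_ne_end (hP.1 j)⟩
    rw [collapse_vout_of_internal ha] at harc ⊢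
    exact grArc_of_resArc harc (not_deletedArc_of_inr hP _ a) (toGR_inl_of_notMem hc)
      (toGR_inr_of_notMem (notMem_offPath_of_mem_support ha.1)) (by simp)

/-- `collapse G s t P (vout s t a)` is `a_out`, which is `s` itself for `a = s`. -/
lemma grReach_of_darts_subset (hP : PathSystem P) {j : Fin r} (hj : ¬ Traversed (P j) s t)
    {a c : V} (W : G.Walk a c) (hW : ¬ W.Nil) (hd : W.darts ⊆ (P j).darts) :
    Relation.ReflTransGen (GRArc G s t P) (Sum.inl (Sum.inl c))
      (Sum.inl (collapse G s t P (vout s t a))) := by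
  induction W with
  | nil => exact absurd .nil hW
  | cons hadj q ih =>
    have htr : Traversed (P j) _ _ := traversed_iff.2 ⟨hadj, hd List.mem_cons_self⟩
    cases q with
    | nil => exact .single (grArc_of_traversed hP hj htr)
    | cons hadj' q' =>
      have htr' : Traversed (P j) _ _ :=
        traversed_iff.2 ⟨hadj', hd (List.mem_cons_of_mem _ List.mem_cons_self)⟩
      have hb : Internal (P j) _ :=
        ⟨htr.snd_mem, htr.snd_ne_start (hP.1 j), htr'.fst_ne_end (hP.1 j)⟩
      have hreach := ih (by simp) fun d h => hd (List.mem_cons_of_mem _ h)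
      rw [collapse_vout_of_internal hb] at hreach
      exact (hreach.tail (grArc_back hP hb)).tail (grArc_of_traversed hP hj htr)

lemma grReach_in_start (hP : PathSystem P) {j : Fin r} {v : V} (hv : Internal (P j) v) :
    Relation.ReflTransGen (GRArc G s t P) (Sum.inl (Sum.inl v)) (Sum.inl (Sum.inl s)) := by
  have h := grReach_of_darts_subset hP (not_traversed_start_end (hP.1 j) hv)
    ((P j).takeUntil v hv.1) (fun hn => hv.2.1 hn.eq.symm)
    ((P j).darts_takeUntil_subset_darts hv.1)
  rwa [vout_start, collapse_inl] at h

lemma grReach_in_out (hP : PathSystem P) {j : Fin r} {u v : V} (hu : Internal (P j) u)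
    (hv : Internal (P j) v) (hlt : (P j).support.idxOf u < (P j).support.idxOf v) :
    Relation.ReflTransGen (GRArc G s t P) (Sum.inl (Sum.inl v)) (Sum.inl (Sum.inr u)) := by
  have hu' := mem_support_takeUntil_of_idxOf_le hv.1 hlt.le
  have h := grReach_of_darts_subset hP (not_traversed_start_end (hP.1 j) hv)
    (((P j).takeUntil v hv.1).dropUntil u hu') (fun hn => by rw [hn.eq] at hlt; omega)
    fun d hd => (P j).darts_takeUntil_subset_darts hv.1
      (((P j).takeUntil v hv.1).darts_dropUntil_subset_darts hu' hd)
  rwa [collapse_vout_of_internal hu] at h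

lemma resReach_of_reachable {x y : offPath G s t P}
    (h : (G.induce (offPath G s t P)).Reachable x y) :
    Relation.ReflTransGen (ResArc G s t P) (Sum.inl (x : V)) (Sum.inl (y : V)) := by
  obtain ⟨W⟩ := h
  induction W with
  | nil => rfl
  | @cons u v _ hadj _ ih =>
    have h := resArc_of_adj (P := P) (u := u.1) (v := v.1) hadj (Or.inl u.2)
    rw [collapse_vout_of_mem_offPath u.2] at h
    exact .head h ih

lemma resReach_of_toGR_eq {x y : V ⊕ V} (hx : x ∈ Set.range (collapse G s t P))
    (hy : y ∈ Set.range (collapse G s t P)) (h : toGR G s t P x = toGR G s t P y) :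
    Relation.ReflTransGen (ResArc G s t P) x y := by
  rcases toGR_eq_of_mem_range hx with hx | ⟨u, hu, rfl, hx⟩ <;>
    rcases toGR_eq_of_mem_range hy with hy | ⟨v, hv, rfl, hy⟩ <;>
    rw [hx, hy] at h
  · rw [Sum.inl.inj h]
  · exact absurd h Sum.inl_ne_inr
  · exact absurd h Sum.inr_ne_inl
  · exact resReach_of_reachable (SimpleGraph.ConnectedComponent.exact (Sum.inr.inj h))

lemma resReach_of_grReach {X Y : GRV G s t P} (h : Relation.ReflTransGen (GRArc G s t P) X Y)
    {x y : V ⊕ V} (hx : x ∈ Set.range (collapse G s t P)) (hy : y ∈ Set.range (collapse G s t P))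
    (hX : toGR G s t P x = X) (hY : toGR G s t P y = Y) :
    Relation.ReflTransGen (ResArc G s t P) x y := by
  induction h generalizing y with
  | refl => exact resReach_of_toGR_eq hx hy (hX.trans hY.symm)
  | tail _ harc ih =>
    obtain ⟨⟨a, b, ⟨hab, -⟩, rfl, rfl⟩, -⟩ := harc
    obtain ⟨a', b', -, ha, hb⟩ := id hab
    exact ((ih ⟨a', ha.symm⟩ rfl).tail hab).trans (resReach_of_toGR_eq ⟨b', hb.symm⟩ hy hY.symm)

lemma resReach_of_bridgeWithS {u : V} (hu : u ∈ offPath G s t P)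
    (hβ : BridgeWithS G s t P (bridgeOf u hu)) :
    Relation.ReflTransGen (ResArc G s t P) (Sum.inl s) (Sum.inl u) ∧
      Relation.ReflTransGen (ResArc G s t P) (Sum.inl u) (Sum.inl s) :=
  ⟨resReach_of_grReach hβ.1 ⟨Sum.inl s, rfl⟩ ⟨Sum.inl u, rfl⟩
      (toGR_inl_of_notMem start_notMem_offPath) (toGR_inl_of_mem hu),
    resReach_of_grReach hβ.2 ⟨Sum.inl u, rfl⟩ ⟨Sum.inl s, rfl⟩
      (toGR_inl_of_mem hu) (toGR_inl_of_notMem start_notMem_offPath)⟩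

end Residual

section LeftSide

variable {V : Type*} [DecidableEq V] (G : SimpleGraph V) (s t : V) {r : ℕ}
  (P : Fin r → G.Walk s t)

def HasBridgeOutNeighbor (j : Fin r) : Prop :=
  ∃ β : Bridge G s t P, BridgeWithS G s t P β ∧
    ∃ u, Internal (P j) u ∧ GRArc G s t P (Sum.inr β) (Sum.inl (Sum.inl u))

def IsRightmostChoice (w : Fin r → V) : Prop :=
  ∀ j : Fin r,
    (HasBridgeOutNeighbor G s t P j →
      Internal (P j) (w j) ∧
      (∃ β : Bridge G s t P, BridgeWithS G s t P β ∧
        GRArc G s t P (Sum.inr β) (Sum.inl (Sum.inl (w j)))) ∧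
      ∀ (β : Bridge G s t P) (u : V), BridgeWithS G s t P β → Internal (P j) u →
        GRArc G s t P (Sum.inr β) (Sum.inl (Sum.inl u)) →
          posOn G s t P j (Sum.inl u) ≤ posOn G s t P j (Sum.inl (w j))) ∧
    (¬ HasBridgeOutNeighbor G s t P j → Internal (P j) (w j) ∧ G.Adj s (w j))

def LeftSide (w : Fin r → V) : Set V :=
  {v | v = s ∨ (∃ β, BridgeWithS G s t P β ∧ InBridge G s t P β v) ∨
    ∃ j, Internal (P j) v ∧ (P j).support.idxOf v ≤ (P j).support.idxOf (w j)}

variable {G s t P} {w : Fin r → V}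

lemma posOn_of_internal {j : Fin r} {v : V} (hv : Internal (P j) v) :
    posOn G s t P j (Sum.inl v) = 2 * (P j).support.idxOf v := by
  rw [posOn, if_neg hv.2.1, if_neg hv.2.2]

lemma IsRightmostChoice.internal (hw : IsRightmostChoice G s t P w) (j : Fin r) :
    Internal (P j) (w j) := by
  by_cases h : HasBridgeOutNeighbor G s t P j
  exacts [((hw j).1 h).1, ((hw j).2 h).1]

lemma IsRightmostChoice.idxOf_le (hw : IsRightmostChoice G s t P w) {j : Fin r}
    {β : Bridge G s t P} {u : V} (hβ : BridgeWithS G s t P β) (hu : Internal (P j) u)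
    (harc : GRArc G s t P (Sum.inr β) (Sum.inl (Sum.inl u))) :
    (P j).support.idxOf u ≤ (P j).support.idxOf (w j) := by
  obtain ⟨hwj, -, hmax⟩ := (hw j).1 ⟨β, hβ, u, hu, harc⟩
  have h := hmax β u hβ hu harc
  rw [posOn_of_internal hu, posOn_of_internal hwj] at h
  omega

lemma IsRightmostChoice.hasBridgeOutNeighbor (hw : IsRightmostChoice G s t P w)
    (hE : NoChords G s t P) (hP : PathSystem P) {j : Fin r} {u : V} (hu : Internal (P j) u)
    (hlt : (P j).support.idxOf u < (P j).support.idxOf (w j)) :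
    HasBridgeOutNeighbor G s t P j := by
  by_contra hnb
  obtain ⟨hwj, hadj⟩ := (hw j).2 hnb
  obtain ⟨j', hj'⟩ := hE.traversed_start hP hadj (Or.inr ⟨j, hwj.1⟩)
  rw [hP.eq_of_internal hwj hj'.snd_mem] at hj'
  have hw1 := hj'.idxOf_snd (hP.1 j)
  have hu0 := idxOf_support_pos hu.1 hu.2.1
  rw [idxOf_support_start] at hw1
  omega

lemma end_notMem_leftSide (hst : s ≠ t) : t ∉ LeftSide G s t P w := by
  rintro (h | ⟨β, -, ht, -⟩ | ⟨j, ht, -⟩)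
  exacts [hst h.symm, ht.2.1 rfl, ht.2.2 rfl]

lemma idxOf_lt_of_mem_leftSide {j : Fin r} {u : V} (hu : Internal (P j) u)
    (hle : (P j).support.idxOf u ≤ (P j).support.idxOf (w j)) (huw : u ≠ w j) :
    (P j).support.idxOf u < (P j).support.idxOf (w j) :=
  lt_of_le_of_ne hle fun h => huw ((List.idxOf_inj hu.1).1 h)

lemma bridgeWithS_of_adj (hst : s ≠ t) (hP : PathSystem P) (hE : NoChords G s t P)
    (hw : IsRightmostChoice G s t P w) {u v : V} (hu : u ∈ LeftSide G s t P w)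
    (huw : ∀ j, u ≠ w j) (hadj : G.Adj u v) (hv : v ∈ offPath G s t P) :
    BridgeWithS G s t P (bridgeOf v hv) := by
  rcases hu with rfl | ⟨β, hβ, hu, rfl⟩ | ⟨j, hu, hle⟩
  · exact ⟨.single (grArc_start_bridge hst hP hv hadj),
      .single (grArc_bridge_out hP hv hadj.symm start_notMem_offPath)⟩
  · have hvu : bridgeOf v hv = bridgeOf u hu :=
      SimpleGraph.ConnectedComponent.sound (SimpleGraph.Adj.reachable (G := G.induce _) hadj.symm)
    rwa [hvu]
  · have hlt := idxOf_lt_of_mem_leftSide hu hle (huw j)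
    obtain ⟨hwj, ⟨β, hβ, harc⟩, -⟩ := (hw j).1 (hw.hasBridgeOutNeighbor hE hP hu hlt)
    exact ⟨((hβ.1.tail harc).trans (grReach_in_out hP hu hwj hlt)).tail
        (grArc_out_bridge hP hu hv hadj),
      .head (grArc_bridge_out hP hv hadj.symm (notMem_offPath_of_mem_support hu.1))
        (grReach_in_start hP hu)⟩

lemma not_adj_end_of_mem_leftSide (hP : PathSystem P) (hE : NoChords G s t P)
    (hw : IsRightmostChoice G s t P w)
    (hnsc : ¬ (Relation.ReflTransGen (ResArc G s t P) (Sum.inl s) (Sum.inl t) ∧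
      Relation.ReflTransGen (ResArc G s t P) (Sum.inl t) (Sum.inl s)))
    {u : V} (hu : u ∈ LeftSide G s t P w) (huw : ∀ j, u ≠ w j) : ¬ G.Adj u t := by
  intro hadj
  rcases hu with rfl | ⟨β, hβ, hu, rfl⟩ | ⟨j, hu, hle⟩
  · obtain ⟨j, hj⟩ := hE.traversed_start hP hadj (Or.inl rfl)
    exact not_traversed_start_end (hP.1 j) (hw.internal j) hj
  · obtain ⟨hsu, hus⟩ := resReach_of_bridgeWithS hu hβ
    have hut := resArc_of_adj (P := P) hadj (Or.inl hu)
    have htu := resArc_of_adj (P := P) hadj.symm (Or.inr hu)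
    rw [collapse_vout_of_mem_offPath hu] at hut
    rw [vout_end, collapse_inl] at htu
    exact hnsc ⟨hsu.tail hut, hus.head htu⟩
  · have hlt := idxOf_lt_of_mem_leftSide hu hle (huw j)
    rcases hE.traversed_of_internal hP hu hadj (Or.inr (Or.inl rfl)) with h | h
    · have ht := h.idxOf_snd (hP.1 j)
      have hwt := idxOf_support_lt_end (hP.1 j) (hw.internal j).1 (hw.internal j).2.2
      omega
    · exact h.fst_ne_end (hP.1 j) rfl

lemma mem_leftSide_of_adj_of_mem_support (hP : PathSystem P) (hE : NoChords G s t P)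
    (hw : IsRightmostChoice G s t P w) {u v : V} (hu : u ∈ LeftSide G s t P w)
    (huw : ∀ j, u ≠ w j) (hadj : G.Adj u v) {j' : Fin r} (hv : v ∈ (P j').support)
    (hvs : v ≠ s) (hvt : v ≠ t) : v ∈ LeftSide G s t P w := by
  refine Or.inr (Or.inr ?_)
  rcases hu with rfl | ⟨β, hβ, hu, rfl⟩ | ⟨j, hu, hle⟩
  · obtain ⟨j, hj⟩ := hE.traversed_start hP hadj (Or.inr ⟨j', hv⟩)
    have hv1 := hj.idxOf_snd (hP.1 j)
    have hw0 := idxOf_support_pos (hw.internal j).1 (hw.internal j).2.1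
    rw [idxOf_support_start] at hv1
    exact ⟨j, ⟨hj.snd_mem, hvs, hvt⟩, by omega⟩
  · have hv' : Internal (P j') v := ⟨hv, hvs, hvt⟩
    exact ⟨j', hv', hw.idxOf_le hβ hv'
      (grArc_bridge_out hP hu hadj (notMem_offPath_of_mem_support hv))⟩
  · have hlt := idxOf_lt_of_mem_leftSide hu hle (huw j)
    rcases hE.traversed_of_internal hP hu hadj (Or.inr (Or.inr ⟨j', hv⟩)) with h | h
    · exact ⟨j, ⟨h.snd_mem, hvs, hvt⟩, by have := h.idxOf_snd (hP.1 j); omega⟩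
    · exact ⟨j, ⟨h.fst_mem, hvs, hvt⟩, by have := h.idxOf_snd (hP.1 j); omega⟩

lemma mem_leftSide_of_adj (hst : s ≠ t) (hP : PathSystem P) (hE : NoChords G s t P)
    (hw : IsRightmostChoice G s t P w)
    (hnsc : ¬ (Relation.ReflTransGen (ResArc G s t P) (Sum.inl s) (Sum.inl t) ∧
      Relation.ReflTransGen (ResArc G s t P) (Sum.inl t) (Sum.inl s)))
    {u v : V} (hu : u ∈ LeftSide G s t P w) (huw : ∀ j, u ≠ w j) (hadj : G.Adj u v) :
    v ∈ LeftSide G s t P w := by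
  by_cases hv : v ∈ offPath G s t P
  · exact Or.inr (Or.inl ⟨_, bridgeWithS_of_adj hst hP hE hw hu huw hadj hv, hv, rfl⟩)
  by_cases hvs : v = s
  · exact Or.inl hvs
  by_cases hvt : v = t
  · subst hvt
    exact absurd hadj (not_adj_end_of_mem_leftSide hP hE hw hnsc hu huw)
  obtain ⟨j', hj'⟩ : ∃ j, v ∈ (P j).support := by
    by_contra! h
    exact hv ⟨hvs, hvt, h⟩
  exact mem_leftSide_of_adj_of_mem_support hP hE hw hu huw hadj hj' hvs hvt

lemma exists_mem_support_of_walk (hst : s ≠ t) (hP : PathSystem P) (hE : NoChords G s t P)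
    (hw : IsRightmostChoice G s t P w)
    (hnsc : ¬ (Relation.ReflTransGen (ResArc G s t P) (Sum.inl s) (Sum.inl t) ∧
      Relation.ReflTransGen (ResArc G s t P) (Sum.inl t) (Sum.inl s)))
    {a c : V} (Q : G.Walk a c) (ha : a ∈ LeftSide G s t P w) (hc : c ∉ LeftSide G s t P w) :
    ∃ j, w j ∈ Q.support := by
  induction Q with
  | nil => exact absurd ha hc
  | @cons a b c hadj q ih =>
    by_cases haw : ∃ j, a = w j
    · obtain ⟨j, rfl⟩ := haw
      exact ⟨j, q.support.mem_cons_self⟩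
    · simp only [not_exists] at haw
      obtain ⟨j, hj⟩ := ih (mem_leftSide_of_adj hst hP hE hw hnsc ha haw hadj) hc
      exact ⟨j, List.mem_cons_of_mem _ hj⟩

end LeftSide

theorem cut_of_no_augmenting_path_general
    {V : Type*} [DecidableEq V]
    (G : SimpleGraph V) (s t : V) (hst : s ≠ t)
    {r : ℕ} (P : Fin r → G.Walk s t) (hP : PathSystem P)
    (hE : ∀ u v : V, G.Adj u v →
      (u = s ∨ u = t ∨ ∃ j, u ∈ (P j).support) →
      (v = s ∨ v = t ∨ ∃ j, v ∈ (P j).support) →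
      ∃ j, s(u, v) ∈ (P j).edges)
    (hnsc : ¬ (Relation.ReflTransGen (ResArc G s t P) (Sum.inl s) (Sum.inl t) ∧
               Relation.ReflTransGen (ResArc G s t P) (Sum.inl t) (Sum.inl s)))
    (w : Fin r → V)
    (hw : ∀ j : Fin r,
      ((∃ β : Bridge G s t P, BridgeWithS G s t P β ∧
          ∃ u, Internal (P j) u ∧
            GRArc G s t P (Sum.inr β) (Sum.inl (Sum.inl u))) →
        Internal (P j) (w j) ∧
        (∃ β : Bridge G s t P, BridgeWithS G s t P β ∧
          GRArc G s t P (Sum.inr β) (Sum.inl (Sum.inl (w j)))) ∧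
        ∀ (β : Bridge G s t P) (u : V), BridgeWithS G s t P β → Internal (P j) u →
          GRArc G s t P (Sum.inr β) (Sum.inl (Sum.inl u)) →
            posOn G s t P j (Sum.inl u) ≤ posOn G s t P j (Sum.inl (w j))) ∧
      ((¬ ∃ β : Bridge G s t P, BridgeWithS G s t P β ∧
          ∃ u, Internal (P j) u ∧
            GRArc G s t P (Sum.inr β) (Sum.inl (Sum.inl u))) →
        Internal (P j) (w j) ∧ G.Adj s (w j))) :
    (∀ Q : G.Walk s t, Q.IsPath → ∃ j : Fin r, w j ∈ Q.support) ∧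
    ∃ S : Finset V, S.card ≤ r ∧ s ∉ S ∧ t ∉ S ∧
      ∀ Q : G.Walk s t, Q.IsPath → ∃ v ∈ S, v ∈ Q.support := by
  replace hw : IsRightmostChoice G s t P w := hw
  have hcut : ∀ Q : G.Walk s t, Q.IsPath → ∃ j : Fin r, w j ∈ Q.support := fun Q _ =>
    exists_mem_support_of_walk hst hP hE hw hnsc Q (Or.inl rfl) (end_notMem_leftSide hst)
  refine ⟨hcut, Finset.univ.image w, Finset.card_image_le.trans (by simp), ?_, ?_, ?_⟩
  · simpa using fun j => (hw.internal j).2.1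
  · simpa using fun j => (hw.internal j).2.2
  · intro Q hQ
    obtain ⟨j, hj⟩ := hcut Q hQ
    exact ⟨w j, Finset.mem_image_of_mem w (Finset.mem_univ j), hj⟩

/-- Assume each `P_j` has an internal vertex and that `s` and `t` are not
mutually reachable in `G_res`. Let `ℬ` be the bridges mutually reachable with
`s` in `G_R`. For each `j`, let `w_j` be the internal vertex `v` of `P_j` such
that `v_in` is the rightmost out-neighbor on `P_j` of a bridge of `ℬ` (if such
an out-neighbor exists), and the internal vertex of `P_j` adjacent to `s`
otherwise. Then `{w_1, …, w_r}` is an `s`–`t` vertex cut of `G`: every `s`–`t`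
path of `G` contains some `w_j`. In particular `G` has an `s`–`t` vertex cut of
size at most `r`. -/
theorem cut_of_no_augmenting_path
    {V : Type*} [Fintype V] [DecidableEq V]
    (G : SimpleGraph V) (s t : V) (hst : s ≠ t)
    {r : ℕ} (hr : 1 ≤ r) (P : Fin r → G.Walk s t) (hP : PathSystem P)
    (hE : ∀ u v : V, G.Adj u v →
      (u = s ∨ u = t ∨ ∃ j, u ∈ (P j).support) →
      (v = s ∨ v = t ∨ ∃ j, v ∈ (P j).support) →
      ∃ j, s(u, v) ∈ (P j).edges)
    (hint : ∀ j : Fin r, ∃ v, Internal (P j) v)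
    (hnsc : ¬ (Relation.ReflTransGen (ResArc G s t P) (Sum.inl s) (Sum.inl t) ∧
               Relation.ReflTransGen (ResArc G s t P) (Sum.inl t) (Sum.inl s)))
    (w : Fin r → V)
    (hw : ∀ j : Fin r,
      ((∃ β : Bridge G s t P, BridgeWithS G s t P β ∧
          ∃ u, Internal (P j) u ∧
            GRArc G s t P (Sum.inr β) (Sum.inl (Sum.inl u))) →
        Internal (P j) (w j) ∧
        (∃ β : Bridge G s t P, BridgeWithS G s t P β ∧
          GRArc G s t P (Sum.inr β) (Sum.inl (Sum.inl (w j)))) ∧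
        ∀ (β : Bridge G s t P) (u : V), BridgeWithS G s t P β → Internal (P j) u →
          GRArc G s t P (Sum.inr β) (Sum.inl (Sum.inl u)) →
            posOn G s t P j (Sum.inl u) ≤ posOn G s t P j (Sum.inl (w j))) ∧
      ((¬ ∃ β : Bridge G s t P, BridgeWithS G s t P β ∧
          ∃ u, Internal (P j) u ∧
            GRArc G s t P (Sum.inr β) (Sum.inl (Sum.inl u))) →
        Internal (P j) (w j) ∧ G.Adj s (w j))) :
    (∀ Q : G.Walk s t, Q.IsPath → ∃ j : Fin r, w j ∈ Q.support) ∧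
    ∃ S : Finset V, S.card ≤ r ∧ s ∉ S ∧ t ∉ S ∧
      ∀ Q : G.Walk s t, Q.IsPath → ∃ v ∈ S, v ∈ Q.support :=
  cut_of_no_augmenting_path_general G s t hst P hP hE hnsc w hw

end PaperTW
end
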